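/- Let y : [0,T] → [0,∞) be absolutely continuous with (1/2)(y²)'(t) + (1/√2)·y(t) ≤ 0 for a.e. t, i.e. y(t)y'(t) + (1/√2)y(t) ≤ 0. Then y(t) = 0 for all t ≥ √2·y(0). -/
import Mathlib


open MeasureTheory intervalIntegral

theorem extinction_time (T : ℝ) (hT : 0 < T) (y y' : ℝ → ℝ)
    (hnonneg : ∀ t ∈ Set.Icc 0 T, 0 ≤ y t)
    (hFTC : ∀ t ∈ Set.Icc 0 T, y t = y 0 + ∫ s in (0:ℝ)..t, y' s)
    (hint : IntervalIntegrable y' volume 0 T)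
    (hineq : ∀ᵐ t ∂(volume.restrict (Set.Icc 0 T)),
      y t * y' t + (1 / Real.sqrt 2) * y t ≤ 0) :
    ∀ t ∈ Set.Icc 0 T, Real.sqrt 2 * y 0 ≤ t → y t = 0 := by
  intro t₀ ht₀ hst
  obtain ⟨ht₀0, ht₀T⟩ := ht₀
  by_contra hne
  have hpos : 0 < y t₀ := lt_of_le_of_ne (hnonneg t₀ ⟨ht₀0, ht₀T⟩) (Ne.symm hne)
  have hs2 : (0:ℝ) < Real.sqrt 2 := by positivity
  have hy0 : y 0 ≤ t₀ / Real.sqrt 2 := by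
    rw [le_div_iff₀ hs2]
    nlinarith [hst]
  have hIcc : Set.Icc (0:ℝ) t₀ ⊆ Set.Icc 0 T := Set.Icc_subset_Icc le_rfl ht₀T
  -- continuity of y on [0,T]
  have hcont : ContinuousOn y (Set.Icc 0 T) := by
    have hIO : IntegrableOn y' (Set.Icc 0 T) := by
      rw [integrableOn_Icc_iff_integrableOn_Ioc]; exact hint.1
    have h2 : ContinuousOn (fun x => ∫ s in (0:ℝ)..x, y' s) (Set.uIcc 0 T) :=
      intervalIntegral.continuousOn_primitive_interval
        (by rwa [Set.uIcc_of_le hT.le])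
    rw [Set.uIcc_of_le hT.le] at h2
    exact (continuousOn_const.add h2).congr fun x hx => hFTC x hx
  -- find a good starting point a
  obtain ⟨a, ha0, hat, hbound, hposIoc⟩ :
      ∃ a, 0 ≤ a ∧ a ≤ t₀ ∧ y a ≤ (t₀ - a) / Real.sqrt 2 ∧
        ∀ s ∈ Set.Ioc a t₀, 0 < y s := by
    by_cases hZ : ∃ s ∈ Set.Icc 0 t₀, y s = 0
    · set Z := {s ∈ Set.Icc (0:ℝ) t₀ | y s = 0} with hZdef
      have hZne : Z.Nonempty := by
        obtain ⟨s, hs, hys⟩ := hZ; exact ⟨s, hs, hys⟩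
      have hZclosed : IsClosed Z := by
        have : Z = Set.Icc 0 t₀ ∩ y ⁻¹' {0} := by
          ext s; simp [hZdef]
        rw [this]
        exact ContinuousOn.preimage_isClosed_of_isClosed
          (hcont.mono hIcc) isClosed_Icc isClosed_singleton
      have hZcompact : IsCompact Z :=
        isCompact_Icc.of_isClosed_subset hZclosed (Set.sep_subset _ _)
      have haZ : sSup Z ∈ Z := hZcompact.sSup_mem hZne
      set a := sSup Z with hadef
      obtain ⟨⟨ha0, hat⟩, hya⟩ := haZ
      refine ⟨a, ha0, hat, ?_, ?_⟩
      · rw [hya]; exact div_nonneg (by linarith) hs2.le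
      · intro s hs
        have hsIcc : s ∈ Set.Icc 0 t₀ := ⟨ha0.trans hs.1.le, hs.2⟩
        rcases lt_or_eq_of_le (hnonneg s (hIcc hsIcc)) with h | h
        · exact h
        · exfalso
          have hsZ : s ∈ Z := ⟨hsIcc, h.symm⟩
          have := le_csSup hZcompact.bddAbove hsZ
          exact absurd this (not_le.mpr hs.1)
    · push_neg at hZ
      refine ⟨0, le_rfl, ht₀0, by simpa using hy0, ?_⟩
      intro s hs
      have hsIcc : s ∈ Set.Icc 0 t₀ := ⟨hs.1.le, hs.2⟩
      exact lt_of_le_of_ne (hnonneg s (hIcc hsIcc)) (Ne.symm (hZ s hsIcc))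
  -- integrability on subintervals
  have hsub : Set.uIcc a t₀ ⊆ Set.uIcc 0 T := by
    rw [Set.uIcc_of_le hat, Set.uIcc_of_le hT.le]
    exact Set.Icc_subset_Icc ha0 ht₀T
  have hsub0 : Set.uIcc (0:ℝ) a ⊆ Set.uIcc 0 T := by
    rw [Set.uIcc_of_le ha0, Set.uIcc_of_le hT.le]
    exact Set.Icc_subset_Icc le_rfl (hat.trans ht₀T)
  have hint' : IntervalIntegrable y' volume a t₀ := hint.mono_set hsub
  have hint0 : IntervalIntegrable y' volume 0 a := hint.mono_set hsub0
  have hintc : IntervalIntegrable (fun _ => -(1 / Real.sqrt 2)) volume a t₀ :=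
    intervalIntegrable_const
  -- a.e. bound  y' ≤ -1/√2 on [a, t₀]
  have hae : ∀ᵐ s ∂(volume.restrict (Set.Icc a t₀)), y' s ≤ -(1 / Real.sqrt 2) := by
    have h1 := ae_restrict_of_ae_restrict_of_subset
      (Set.Icc_subset_Icc ha0 ht₀T) hineq
    have h2 : ∀ᵐ s ∂(volume.restrict (Set.Icc a t₀)), s ∈ Set.Icc a t₀ :=
      ae_restrict_mem measurableSet_Icc
    have h3 : ∀ᵐ s ∂(volume.restrict (Set.Icc a t₀)), s ≠ a := by
      refine ae_restrict_of_ae ?_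
      have : {s : ℝ | ¬ s ≠ a} = {a} := by ext s; simp
      rw [ae_iff, this]
      exact measure_singleton a
    filter_upwards [h1, h2, h3] with s hs1 hs2 hs3
    have hys : 0 < y s := hposIoc s ⟨lt_of_le_of_ne hs2.1 (Ne.symm hs3), hs2.2⟩
    nlinarith [hs1, hys]
  have hmono := intervalIntegral.integral_mono_ae_restrict hat hint' hintc hae
  rw [intervalIntegral.integral_const, smul_eq_mul] at hmono
  -- FTC pieces
  have hadd : (∫ s in (0:ℝ)..a, y' s) + ∫ s in a..t₀, y' s = ∫ s in (0:ℝ)..t₀, y' s :=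
    intervalIntegral.integral_add_adjacent_intervals hint0 hint'
  have hya := hFTC a ⟨ha0, hat.trans ht₀T⟩
  have hyt := hFTC t₀ ⟨ht₀0, ht₀T⟩
  have key : y t₀ ≤ y a + (t₀ - a) * (-(1 / Real.sqrt 2)) := by linarith
  have h1 : (t₀ - a) * (-(1 / Real.sqrt 2)) = -((t₀ - a) / Real.sqrt 2) := by ring
  rw [h1] at key
  linarith
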